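/- arXiv:1907.10398 — 7 statements merged into one kernel-verified Lean document; each statement's English description precedes it below -/
import Mathlib

section
/- In a median graph G, a subset of vertices is convex if and only if it is gated. -/
def interval {V : Type*} (G : SimpleGraph V) (u v : V) : Set V :=
  {x | G.dist u x + G.dist x v = G.dist u v}

def IsMedianGraph {V : Type*} (G : SimpleGraph V) : Prop :=
  G.Connected ∧ ∀ x y z : V,
    ∃! m : V, m ∈ interval G x y ∧ m ∈ interval G y z ∧ m ∈ interval G z x

/-- A set is convex if it contains the interval between any two of its vertices. -/
def IsConvexSet {V : Type*} (G : SimpleGraph V) (H : Set V) : Prop :=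
  ∀ u ∈ H, ∀ v ∈ H, interval G u v ⊆ H

/-- A set is gated if every vertex has a gate in it. -/
def IsGatedSet {V : Type*} (G : SimpleGraph V) (H : Set V) : Prop :=
  ∀ v : V, ∃ v' ∈ H, ∀ u ∈ H, v' ∈ interval G u v

theorem convex_iff_gated {V : Type*} [Fintype V] (G : SimpleGraph V)
    (hG : IsMedianGraph G) (H : Set V) (hne : H.Nonempty) :
    IsConvexSet G H ↔ IsGatedSet G H := by
  obtain ⟨hconn, hmed⟩ := hG
  constructor
  · intro hconv v
    -- pick v' in H minimizing dist v
    classical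
    obtain ⟨v', hv'H, hmin⟩ := Set.exists_min_image H (fun u => G.dist v u)
      (Set.toFinite H) hne
    refine ⟨v', hv'H, fun u hu => ?_⟩
    obtain ⟨m, ⟨hm1, hm2, hm3⟩, _⟩ := hmed u v' v
    have hmH : m ∈ H := hconv u hu v' hv'H hm1
    have hvm : G.dist v' m = 0 := by
      have hminm : G.dist v v' ≤ G.dist v m := hmin m hmH
      have h2 : G.dist v' m + G.dist m v = G.dist v' v := hm2
      have hc1 := SimpleGraph.dist_comm (G := G) (u := v) (v := m)
      have hc2 := SimpleGraph.dist_comm (G := G) (u := v) (v := v')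
      omega
    have hvm' : v' = m := (hconn.dist_eq_zero_iff).mp hvm
    have hm3' : G.dist v m + G.dist m u = G.dist v u := hm3
    show G.dist u v' + G.dist v' v = G.dist u v
    rw [hvm']
    have := SimpleGraph.dist_comm (G := G) (u := u) (v := m)
    have := SimpleGraph.dist_comm (G := G) (u := u) (v := v)
    have := SimpleGraph.dist_comm (G := G) (u := m) (v := v)
    omega
  · intro hgate u hu w hw x hx
    obtain ⟨x', hx'H, hx'⟩ := hgate x
    have h1 : G.dist u x' + G.dist x' x = G.dist u x := hx' u hu
    have h2 : G.dist w x' + G.dist x' x = G.dist w x := hx' w hw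
    have h3 : G.dist u x + G.dist x w = G.dist u w := hx
    have h4 : G.dist u w ≤ G.dist u x' + G.dist x' w := hconn.dist_triangle
    have hc1 := SimpleGraph.dist_comm (G := G) (u := x) (v := w)
    have hc2 := SimpleGraph.dist_comm (G := G) (u := x') (v := w)
    have h0 : G.dist x' x = 0 := by omega
    have : x' = x := (hconn.dist_eq_zero_iff).mp h0
    rwa [← this]
end

section
/- In a median graph G, every convex set of vertices is the intersection of all halfspaces containing it. -/
def Wset {V : Type*} (G : SimpleGraph V) (u v : V) : Set V :=
  {x | G.dist u x < G.dist v x}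

/-- In a median graph, every (nonempty) convex set is the intersection of all
halfspaces containing it. Halfspaces are the sets `W(u,v)` for edges `uv`. -/
theorem convex_eq_inter_halfspaces {V : Type*} [Fintype V] (G : SimpleGraph V)
    (hG : IsMedianGraph G) (S : Set V) (hne : S.Nonempty) (hconv : IsConvexSet G S) :
    S = ⋂₀ {H : Set V | (∃ u v : V, G.Adj u v ∧ H = Wset G u v) ∧ S ⊆ H} := by
  obtain ⟨hconn, hmed⟩ := hG
  apply Set.Subset.antisymm
  · intro s hs H hH
    exact hH.2 hs
  · intro x hx
    by_contra hxS
    -- choose p ∈ S minimizing distance to x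
    obtain ⟨p, hpS, hpmin⟩ := Set.exists_min_image S (G.dist x) (Set.toFinite S) hne
    have hxp : G.dist x p ≠ 0 := by
      intro h
      rw [hconn.dist_eq_zero_iff] at h
      exact hxS (h ▸ hpS)
    -- find neighbor z of p on a geodesic from p to x
    have hpx : G.dist p x ≠ 0 := by rwa [SimpleGraph.dist_comm]
    obtain ⟨w, hw⟩ := SimpleGraph.exists_walk_of_dist_ne_zero hpx
    have hwlen : w.length ≠ 0 := by
      rw [hw]; exact hpx
    obtain ⟨z, hadj, wt, rfl⟩ :
        ∃ (z : V) (h : G.Adj p z) (wt : G.Walk z x), w = SimpleGraph.Walk.cons h wt := by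
      cases w with
      | nil => simp at hwlen
      | cons h t => exact ⟨_, h, t, rfl⟩
    have hzx : G.dist z x + 1 = G.dist p x := by
      have h1 : G.dist z x ≤ wt.length := SimpleGraph.dist_le wt
      have h2 : G.dist p x ≤ G.dist p z + G.dist z x := hconn.dist_triangle
      have hpz : G.dist p z = 1 := SimpleGraph.dist_eq_one_iff_adj.mpr hadj
      simp only [SimpleGraph.Walk.length_cons] at hw
      omega
    -- z ∉ S by minimality
    have hzS : z ∉ S := by
      intro hz
      have := hpmin z hz
      rw [show G.dist x z = G.dist z x from SimpleGraph.dist_comm,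
        show G.dist x p = G.dist p x from SimpleGraph.dist_comm] at this
      omega
    -- show S ⊆ W(p,z) and x ∉ W(p,z)
    have hmem : Wset G p z ∈ {H : Set V | (∃ u v : V, G.Adj u v ∧ H = Wset G u v) ∧ S ⊆ H} := by
      constructor
      · exact ⟨p, z, hadj, rfl⟩
      · intro s hsS
        obtain ⟨m, ⟨hm1, hm2, hm3⟩, _⟩ := hmed z p s
        have hmS : m ∈ S := hconv p hpS s hsS hm2
        have hpz : G.dist p z = 1 := SimpleGraph.dist_eq_one_iff_adj.mpr hadj
        have hzp : G.dist z p = 1 := by rwa [SimpleGraph.dist_comm]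
        simp only [interval, Set.mem_setOf_eq] at hm1 hm3
        rw [hzp] at hm1
        rcases Nat.add_eq_one_iff.mp hm1 with ⟨h0, _⟩ | ⟨_, h0⟩
        · -- m = z, contradiction
          exfalso
          rw [hconn.dist_eq_zero_iff] at h0
          exact hzS (h0 ▸ hmS)
        · -- m = p
          rw [hconn.dist_eq_zero_iff] at h0
          subst h0
          simp only [Wset, Set.mem_setOf_eq]
          rw [show G.dist m s = G.dist s m from SimpleGraph.dist_comm,
            show G.dist z s = G.dist s z from SimpleGraph.dist_comm]
          omega
    have := hx _ hmem
    rw [Wset, Set.mem_setOf_eq] at this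
    omega
end

section
/- In a median graph G with basepoint v0, every vertex v together with all its predecessors (neighbors of v in I(v0,v)) belongs to a single hypercube subgraph of G (the downward cube property). -/
/-- The `k`-dimensional hypercube graph: vertices are `Fin k → Bool`, two vertices are
adjacent iff they differ in exactly one coordinate. -/
def cubeGraph (k : ℕ) : SimpleGraph (Fin k → Bool) :=
  SimpleGraph.fromRel (fun x y => ∃ i, x i ≠ y i ∧ ∀ j, j ≠ i → x j = y j)

/-!
Order `V` from the basepoint: `x ≤ y` iff `x ∈ I(v0, y)`. In a median graph this is a
meet-semilattice, the meet of `x` and `y` being the median of `v0`, `x`, `y`, and with the rank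
`r = d(v0, ·)` one has `d(x, y) = r x + r y - 2 r (x ⊓ y)`. Median graphs have no triangles, so two
distinct lower covers of an element meet two ranks below it; uniqueness of medians moreover
prevents two different lower covers `a, b` of `c` from cutting out the same lower cover
`a ⊓ p = b ⊓ p` of some `p ≤ c`. By induction, the meet of any `S` of the predecessors `u_i` of `v` has rank
`r v - |S|`; in particular `v` has at most `r v` predecessors, and `S ↦ ⨅_{i ∈ S} u_i` is an
isometric embedding of the Hamming cube into `G`, sending `∅` to `v` and `{i}` to `u_i`.
-/

section

open Finset Function SimpleGraph

lemma cubeGraph_adj_iff_hammingDist {k : ℕ} {x y : Fin k → Bool} :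
    (cubeGraph k).Adj x y ↔ hammingDist x y = 1 := by
  rw [cubeGraph, fromRel_adj, hammingDist, card_eq_one]
  simp only [eq_singleton_iff_unique_mem, mem_filter, mem_univ, true_and]
  constructor
  · rintro ⟨-, ⟨i, hi, h⟩ | ⟨i, hi, h⟩⟩
    · exact ⟨i, hi, fun j hj => by_contra fun hji => hj (h j hji)⟩
    · exact ⟨i, hi.symm, fun j hj => by_contra fun hji => hj (h j hji).symm⟩
  · rintro ⟨i, hi, h⟩
    exact ⟨fun hxy => hi (congrFun hxy i),
      Or.inl ⟨i, hi, fun j hji => by_contra fun hj => hji (h j hj)⟩⟩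

def cubeGraph.embeddingOfIsometry {V : Type*} {G : SimpleGraph V} {k : ℕ}
    (f : (Fin k → Bool) → V) (hf : ∀ x y, G.dist (f x) (f y) = hammingDist x y) :
    cubeGraph k ↪g G where
  toFun := f
  inj' x y h := hammingDist_eq_zero.mp (by rw [← hf, h, dist_self])
  map_rel_iff' {x y} := by
    rw [← dist_eq_one_iff_adj, cubeGraph_adj_iff_hammingDist]
    exact hf x y ▸ Iff.rfl

lemma hammingDist_add_card_add_card {ι : Type*} [Fintype ι] [DecidableEq ι] (x y : ι → Bool) :
    hammingDist x y + #{i | x i} + #{i | y i} =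
      2 * #(({i | x i} : Finset ι) ∪ ({i | y i} : Finset ι)) := by
  simp only [hammingDist, ← filter_or, card_filter, ← sum_add_distrib, mul_sum]
  refine sum_congr rfl fun i _ => ?_
  cases x i <;> cases y i <;> rfl

variable {V : Type*} {G : SimpleGraph V}

lemma mem_interval {u v x : V} : x ∈ interval G u v ↔ G.dist u x + G.dist x v = G.dist u v :=
  Iff.rfl

lemma interval_comm (u v : V) : interval G u v = interval G v u := by
  ext x
  change _ = _ ↔ _ = _
  rw [G.dist_comm (u := v) (v := x), G.dist_comm (u := x) (v := u), G.dist_comm (u := v)]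
  omega

lemma eq_or_eq_of_mem_interval_of_adj (hc : G.Connected) {a b x : V} (hab : G.Adj a b)
    (hx : x ∈ interval G a b) : x = a ∨ x = b := by
  rw [mem_interval, dist_eq_one_iff_adj.mpr hab, Nat.add_eq_one_iff] at hx
  rcases hx with ⟨h, -⟩ | ⟨-, h⟩
  · exact .inl (hc.dist_eq_zero_iff.mp h).symm
  · exact .inr (hc.dist_eq_zero_iff.mp h)

namespace IsMedianGraph

lemma not_adj_of_adj_of_adj (hG : IsMedianGraph G) {a b c : V} (hab : G.Adj a b)
    (hbc : G.Adj b c) : ¬G.Adj c a := by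
  intro hca
  obtain ⟨m, ⟨hm₁, hm₂, hm₃⟩, -⟩ := hG.2 a b c
  rcases eq_or_eq_of_mem_interval_of_adj hG.1 hab hm₁ with rfl | rfl
  · rcases eq_or_eq_of_mem_interval_of_adj hG.1 hbc hm₂ with h | h
    · exact hab.ne h
    · exact hca.ne h.symm
  · rcases eq_or_eq_of_mem_interval_of_adj hG.1 hca hm₃ with h | h
    · exact hbc.ne h
    · exact hab.ne h.symm

lemma dist_eq_two_of_adj_of_adj (hG : IsMedianGraph G) {a b c : V} (hac : G.Adj a c)
    (hbc : G.Adj b c) (hab : a ≠ b) : G.dist a b = 2 := by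
  have htri : G.dist a b ≤ G.dist a c + G.dist c b := hG.1.dist_triangle
  rw [dist_eq_one_iff_adj.mpr hac, dist_eq_one_iff_adj.mpr hbc.symm] at htri
  have h₀ : G.dist a b ≠ 0 := fun h => hab (hG.1.dist_eq_zero_iff.mp h)
  have h₁ : G.dist a b ≠ 1 := fun h =>
    hG.not_adj_of_adj_of_adj hbc hac.symm (dist_eq_one_iff_adj.mp h)
  omega

noncomputable def median (hG : IsMedianGraph G) (x y z : V) : V :=
  (hG.2 x y z).exists.choose

lemma median_mem (hG : IsMedianGraph G) (x y z : V) :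
    hG.median x y z ∈ interval G x y ∧ hG.median x y z ∈ interval G y z ∧
      hG.median x y z ∈ interval G z x :=
  (hG.2 x y z).exists.choose_spec

lemma eq_median (hG : IsMedianGraph G) {x y z m : V} (h₁ : m ∈ interval G x y)
    (h₂ : m ∈ interval G y z) (h₃ : m ∈ interval G z x) : m = hG.median x y z :=
  (hG.2 x y z).unique ⟨h₁, h₂, h₃⟩ (hG.median_mem x y z)

lemma mem_interval_median (hG : IsMedianGraph G) {v0 x y z : V} (hzx : z ∈ interval G v0 x)
    (hzy : z ∈ interval G v0 y) : z ∈ interval G v0 (hG.median v0 x y) := by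
  obtain ⟨hzq, hqxy, hqyz⟩ := hG.median_mem z x y
  set q := hG.median z x y
  rw [mem_interval] at hzx hzy hzq hqyz ⊢
  have : G.dist v0 q ≤ G.dist v0 z + G.dist z q := hG.1.dist_triangle
  have : G.dist v0 x ≤ G.dist v0 q + G.dist q x := hG.1.dist_triangle
  have : G.dist v0 y ≤ G.dist v0 q + G.dist q y := hG.1.dist_triangle
  have : G.dist q z = G.dist z q := dist_comm
  have : G.dist q y = G.dist y q := dist_comm
  have : G.dist z y = G.dist y z := dist_comm
  have : G.dist y v0 = G.dist v0 y := dist_comm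
  have : G.dist q v0 = G.dist v0 q := dist_comm
  -- `q` lies on geodesics from `v0` to `x` and to `y` (through `z`), so it is also their median
  have hq : q = hG.median v0 x y := by
    refine hG.eq_median (mem_interval.mpr ?_) hqxy (mem_interval.mpr ?_) <;> omega
  rw [← hq]
  omega

end IsMedianGraph

def Rooted (_ : SimpleGraph V) (_ : V) : Type _ := V

namespace Rooted

variable {v0 : V}

noncomputable def rank (x : Rooted G v0) : ℕ := G.dist v0 x

variable [hG : Fact (IsMedianGraph G)]

noncomputable instance : SemilatticeInf (Rooted G v0) where
  le x y := G.dist v0 x + G.dist x y = G.dist v0 y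
  le_refl x := by
    have : G.dist x x = 0 := dist_self
    change G.dist v0 x + G.dist x x = G.dist v0 x
    omega
  le_trans x y z hxy hyz := by
    replace hxy : G.dist v0 x + G.dist x y = G.dist v0 y := hxy
    replace hyz : G.dist v0 y + G.dist y z = G.dist v0 z := hyz
    have : G.dist x z ≤ G.dist x y + G.dist y z := hG.out.1.dist_triangle
    have : G.dist v0 z ≤ G.dist v0 x + G.dist x z := hG.out.1.dist_triangle
    change G.dist v0 x + G.dist x z = G.dist v0 z
    omega
  le_antisymm x y hxy hyx := by
    replace hxy : G.dist v0 x + G.dist x y = G.dist v0 y := hxy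
    replace hyx : G.dist v0 y + G.dist y x = G.dist v0 x := hyx
    have : G.dist x y = G.dist y x := dist_comm
    exact hG.out.1.dist_eq_zero_iff.mp (by omega)
  inf x y := hG.out.median v0 x y
  inf_le_left x y := (hG.out.median_mem v0 x y).1
  inf_le_right x y := (interval_comm (G := G) y v0 ▸ (hG.out.median_mem v0 x y).2.2 :)
  le_inf _ _ _ := hG.out.mem_interval_median

variable {a b c p x y : Rooted G v0}

lemma le_iff_dist : x ≤ y ↔ rank x + G.dist x y = rank y := Iff.rfl

lemma adj_iff_rank_add_one (h : x ≤ y) : G.Adj x y ↔ rank x + 1 = rank y := by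
  rw [le_iff_dist] at h
  exact dist_eq_one_iff_adj.symm.trans ⟨fun _ => by omega, fun _ => by omega⟩

lemma dist_add_two_mul_rank_inf (x y : Rooted G v0) :
    G.dist x y + 2 * rank (x ⊓ y) = rank x + rank y := by
  have hx := le_iff_dist.mp (inf_le_left : x ⊓ y ≤ x)
  have hy := le_iff_dist.mp (inf_le_right : x ⊓ y ≤ y)
  have hxy := mem_interval.mp (hG.out.median_mem v0 x y).2.1
  have : G.dist x (x ⊓ y : Rooted G v0) = G.dist (x ⊓ y : Rooted G v0) x := dist_comm
  change G.dist x (x ⊓ y : Rooted G v0) + G.dist (x ⊓ y : Rooted G v0) y = G.dist x y at hxy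
  omega

lemma rank_inf_add_two (hac : a ≤ c) (hbc : b ≤ c) (ha : rank a + 1 = rank c)
    (hb : rank b + 1 = rank c) (hab : a ≠ b) : rank (a ⊓ b) + 2 = rank c := by
  have := dist_add_two_mul_rank_inf a b
  have := hG.out.dist_eq_two_of_adj_of_adj ((adj_iff_rank_add_one hac).mpr ha)
    ((adj_iff_rank_add_one hbc).mpr hb) hab
  omega

lemma inf_ne_inf (hac : a ≤ c) (hbc : b ≤ c) (ha : rank a + 1 = rank c)
    (hb : rank b + 1 = rank c) (hab : a ≠ b) (hpc : p ≤ c) (hap : rank (a ⊓ p) + 1 = rank p) :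
    a ⊓ p ≠ b ⊓ p := by
  intro he
  have hq := rank_inf_add_two hac hbc ha hb hab
  have hqp : a ⊓ b ⊓ p = a ⊓ p :=
    le_antisymm (inf_le_inf_right p inf_le_left)
      (le_inf (le_inf inf_le_left (he ▸ inf_le_left)) inf_le_right)
  have hab₂ := hG.out.dist_eq_two_of_adj_of_adj ((adj_iff_rank_add_one hac).mpr ha)
    ((adj_iff_rank_add_one hbc).mpr hb) hab
  have hac' := le_iff_dist.mp hac
  have hbc' := le_iff_dist.mp hbc
  have hpc' := le_iff_dist.mp hpc
  have hqa := le_iff_dist.mp (inf_le_left : a ⊓ b ≤ a)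
  have hqb := le_iff_dist.mp (inf_le_right : a ⊓ b ≤ b)
  have hap' := dist_add_two_mul_rank_inf a p
  have hbp' := dist_add_two_mul_rank_inf b p
  have hqp' := dist_add_two_mul_rank_inf (a ⊓ b) p
  rw [hqp] at hqp'
  rw [← he] at hbp'
  have : G.dist c b = G.dist b c := dist_comm
  have : G.dist c p = G.dist p c := dist_comm
  have : G.dist c a = G.dist a c := dist_comm
  have : G.dist p a = G.dist a p := dist_comm
  have : G.dist a (a ⊓ b : Rooted G v0) = G.dist (a ⊓ b : Rooted G v0) a := dist_comm
  have : G.dist b (a ⊓ b : Rooted G v0) = G.dist (a ⊓ b : Rooted G v0) b := dist_comm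
  have : G.dist p (a ⊓ b : Rooted G v0) = G.dist (a ⊓ b : Rooted G v0) p := dist_comm
  -- both `c` and `a ⊓ b` are medians of `a`, `b`, `p`
  have hcq : c = a ⊓ b := (hG.out.2 a b p).unique
    ⟨mem_interval.mpr (by omega), mem_interval.mpr (by omega), mem_interval.mpr (by omega)⟩
    ⟨mem_interval.mpr (by omega), mem_interval.mpr (by omega), mem_interval.mpr (by omega)⟩
  rw [← hcq] at hq
  omega

section LowerCovers

variable {ι : Type*} {u : ι → Set.Iic c}

lemma rank_inf_insert_add_one [DecidableEq ι] (hu : ∀ i, rank (u i).1 + 1 = rank c)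
    (hinj : Injective u) {S : Finset ι} {i : ι} (hi : i ∉ S) :
    rank ((insert i S).inf u).1 + 1 = rank (S.inf u).1 := by
  induction S using Finset.induction_on generalizing i with
  | empty => simpa using hu i
  | insert l S hl ih =>
    obtain ⟨hil, hiS⟩ : i ≠ l ∧ i ∉ S := by simpa using hi
    have hip := ih hiS
    have hlp := ih hl
    rw [inf_insert] at hip hlp ⊢
    rw [inf_insert, ← inf_assoc, inf_inf_distrib_right]
    simp only [Set.Iic.coe_inf] at hip hlp ⊢
    have hne := inf_ne_inf (u i).2 (u l).2 (hu i) (hu l)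
      (Subtype.coe_injective.ne (hinj.ne hil)) (S.inf u).2 hip
    have := rank_inf_add_two inf_le_right inf_le_right hip hlp hne
    omega

lemma rank_inf_add_card [DecidableEq ι] (hu : ∀ i, rank (u i).1 + 1 = rank c)
    (hinj : Injective u) (S : Finset ι) : rank (S.inf u).1 + #S = rank c := by
  induction S using Finset.induction_on with
  | empty => simp
  | insert i S hi ih =>
    have := rank_inf_insert_add_one hu hinj hi
    rw [card_insert_of_notMem hi]
    omega

lemma finite_of_rank_add_one (hu : ∀ i, rank (u i).1 + 1 = rank c) (hinj : Injective u) :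
    Finite ι := by
  classical
  by_contra h
  rw [not_finite_iff_infinite] at h
  obtain ⟨S, hS⟩ := Infinite.exists_subset_card_eq ι (rank c + 1)
  have := rank_inf_add_card hu hinj S
  omega

variable [Fintype ι]

noncomputable def cubeVertex (u : ι → Set.Iic c) (x : ι → Bool) : Rooted G v0 :=
  (({i | x i} : Finset ι).inf u).1

lemma cubeVertex_false : cubeVertex u (fun _ => false) = c := by
  simp [cubeVertex]

lemma cubeVertex_single [DecidableEq ι] (j : ι) :
    cubeVertex u (fun i => decide (i = j)) = u j := by
  simp [cubeVertex, filter_eq']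

lemma dist_cubeVertex [DecidableEq ι] (hu : ∀ i, rank (u i).1 + 1 = rank c)
    (hinj : Injective u) (x y : ι → Bool) :
    G.dist (cubeVertex u x) (cubeVertex u y) = hammingDist x y := by
  have h := dist_add_two_mul_rank_inf (cubeVertex u x) (cubeVertex u y)
  rw [cubeVertex, cubeVertex, ← Set.Iic.coe_inf, ← inf_union] at h
  have := rank_inf_add_card hu hinj {i | x i}
  have := rank_inf_add_card hu hinj {i | y i}
  have := rank_inf_add_card hu hinj (({i | x i} : Finset ι) ∪ ({i | y i} : Finset ι))
  have := hammingDist_add_card_add_card x y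
  unfold cubeVertex
  omega

end LowerCovers

end Rooted

end

theorem downward_cube_property_general {V : Type*} (G : SimpleGraph V)
    (hG : IsMedianGraph G) (v0 v : V) :
    ∃ (k : ℕ) (f : cubeGraph k ↪g G), v ∈ Set.range ⇑f ∧
      {u : V | G.Adj u v ∧ u ∈ interval G v0 v} ⊆ Set.range ⇑f := by
  classical
  have : Fact (IsMedianGraph G) := ⟨hG⟩
  set P := {u : V | G.Adj u v ∧ u ∈ interval G v0 v}
  let c : Rooted G v0 := v
  let u : P → Set.Iic c := fun w => ⟨w.1, w.2.2⟩
  have hu (w : P) : Rooted.rank (u w).1 + 1 = Rooted.rank c :=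
    (Rooted.adj_iff_rank_add_one (u w).2).mp w.2.1
  have hinj : Function.Injective u := fun w w' h => Subtype.ext (Subtype.mk.inj h)
  have := Rooted.finite_of_rank_add_one hu hinj
  obtain ⟨n, ⟨e⟩⟩ := Finite.exists_equiv_fin P
  let u' : Fin n → Set.Iic c := fun i => u (e.symm i)
  have hF := Rooted.dist_cubeVertex (u := u') (fun _ => hu _) (hinj.comp e.symm.injective)
  refine ⟨n, cubeGraph.embeddingOfIsometry _ hF, ⟨fun _ => false, Rooted.cubeVertex_false⟩,
    fun w hw => ⟨fun i => decide (i = e ⟨w, hw⟩), ?_⟩⟩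
  exact (Rooted.cubeVertex_single _).trans (congrArg (fun p => (u p).1) (e.symm_apply_apply _))

/-- Downward cube property: every vertex `v` together with all its predecessors
(neighbors of `v` in `I(v0,v)`) lies in a single induced hypercube of `G`. -/
theorem downward_cube_property {V : Type*} [Fintype V] (G : SimpleGraph V)
    (hG : IsMedianGraph G) (v0 v : V) :
    ∃ (k : ℕ) (f : cubeGraph k ↪g G), v ∈ Set.range ⇑f ∧
      {u : V | G.Adj u v ∧ u ∈ interval G v0 v} ⊆ Set.range ⇑f :=
  downward_cube_property_general G hG v0 v
end

section
/- In a median graph G rooted at v0, if uv is an edge with d(v0,u) = d(v0,v) - 1 and v has a second neighbor v' ≠ u with d(v0,v') = d(v0,v) - 1, then there exists a vertex u' adjacent to both u and v' with d(v0,u') = d(v0,v) - 2, such that u'uvv' is a 4-cycle in which uv and u'v' are opposite edges. -/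
theorem second_predecessor_square {V : Type*} [Fintype V] (G : SimpleGraph V)
    (hG : IsMedianGraph G) (v0 u v v' : V)
    (huv : G.Adj u v) (hu : G.dist v0 u + 1 = G.dist v0 v)
    (hvv' : G.Adj v v') (hne : v' ≠ u) (hv' : G.dist v0 v' + 1 = G.dist v0 v) :
    ∃ u' : V, G.Adj u' u ∧ G.Adj u' v' ∧ u' ≠ v ∧
      G.dist v0 u' + 2 = G.dist v0 v := by
  obtain ⟨hconn, hmed⟩ := hG
  obtain ⟨m, ⟨h1, h2, h3⟩, -⟩ := hmed v0 u v'
  simp only [interval, Set.mem_setOf_eq] at h1 h2 h3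
  -- distances
  have hd1 : G.dist u v = 1 := SimpleGraph.dist_eq_one_iff_adj.mpr huv
  have hd2 : G.dist v v' = 1 := SimpleGraph.dist_eq_one_iff_adj.mpr hvv'
  have hDle : G.dist u v' ≤ 2 := by
    calc G.dist u v' ≤ G.dist u v + G.dist v v' := hconn.dist_triangle
    _ = 2 := by omega
  have hDne : G.dist u v' ≠ 0 := by
    intro h
    exact hne ((hconn.dist_eq_zero_iff).mp h).symm
  have hcm : G.dist v' m = G.dist m v' := G.dist_comm
  have hcm2 : G.dist m v0 = G.dist v0 m := G.dist_comm
  have hcm3 : G.dist u m = G.dist m u := G.dist_comm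
  have hcv : G.dist v' v0 = G.dist v0 v' := G.dist_comm
  -- from h1 and h3: d(m,u) = d(m,v')
  have hb : G.dist m u = G.dist m v' := by omega
  -- d(u,v') = 2 d(m,u), between 1 and 2, so = 2 and d(m,u)=1
  have hmu : G.dist m u = 1 := by omega
  have hmv' : G.dist m v' = 1 := by omega
  refine ⟨m, SimpleGraph.dist_eq_one_iff_adj.mp hmu,
    SimpleGraph.dist_eq_one_iff_adj.mp hmv', ?_, by omega⟩
  intro h
  subst h
  omega
end

section
/- Let G be a median graph with weight function w, let E_i be a Θ-class with complementary halfspaces H'_i and H''_i. If x'' ∈ H''_i and x' is the gate of x'' in H'_i, then F_w(x'') ≥ F_w(x') + d(x'',x')·(w(H'_i) - w(H''_i)), where F_w(x) = Σ_{v} w(v)·d(x,v). -/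
open Finset

def IsGate {V : Type*} (G : SimpleGraph V) (H : Set V) (z g : V) : Prop :=
  g ∈ H ∧ ∀ x ∈ H, g ∈ interval G x z

/-- In a median graph, for an edge `ab`, every vertex is strictly closer to `a`
or strictly closer to `b`. -/
lemma median_dist_ne {V : Type*} (G : SimpleGraph V) (hG : IsMedianGraph G)
    {a b : V} (hab : G.Adj a b) (v : V) : G.dist a v ≠ G.dist b v := by
  obtain ⟨hconn, hmed⟩ := hG
  obtain ⟨m, ⟨h1, h2, h3⟩, -⟩ := hmed a b v
  have hdab : G.dist a b = 1 := by
    rw [SimpleGraph.dist_eq_one_iff_adj]; exact hab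
  have h1' : G.dist a m + G.dist m b = 1 := by
    have := h1; simp only [interval, Set.mem_setOf_eq] at this; rw [this, hdab]
  simp only [interval, Set.mem_setOf_eq] at h2 h3
  rcases Nat.eq_zero_or_pos (G.dist a m) with h0 | hpos
  · -- m = a
    have hma : a = m := hconn.dist_eq_zero_iff.mp h0
    have hmb : G.dist m b = 1 := by omega
    subst hma
    have h2' : 1 + G.dist a v = G.dist b v := by
      rw [← h2, SimpleGraph.dist_comm (u := b) (v := a)]
      omega
    omega
  · have h0 : G.dist m b = 0 := by omega
    have hmb : m = b := hconn.dist_eq_zero_iff.mp h0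
    subst hmb
    have hma : G.dist m a = 1 := by
      rw [SimpleGraph.dist_comm (u := m) (v := a)]; omega
    have h3' : G.dist v m + 1 = G.dist v a := by rw [← h3, hma]
    rw [SimpleGraph.dist_comm (u := v) (v := m), SimpleGraph.dist_comm (u := v) (v := a)] at h3'
    omega

/-- For an edge `ab`, with halfspaces `H' = W(a,b)` and `H'' = W(b,a)`: if
`x'' ∈ H''` and `x'` is the gate of `x''` in `H'`, then
`F_w(x'') ≥ F_w(x') + d(x'',x')·(w(H') - w(H''))`. -/
theorem median_function_gate_inequality {V : Type*} [Fintype V] (G : SimpleGraph V)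
    (hG : IsMedianGraph G) (w : V → ℝ) (hw : ∀ v, 0 ≤ w v)
    (a b : V) (hab : G.Adj a b) (x'' x' : V)
    (hx'' : x'' ∈ Wset G b a) (hx' : IsGate G (Wset G a b) x'' x') :
    (∑ v : V, w v * (G.dist x'' v : ℝ)) ≥
      (∑ v : V, w v * (G.dist x' v : ℝ)) +
        (G.dist x'' x' : ℝ) *
          ((∑ v ∈ univ.filter (fun z => G.dist a z < G.dist b z), w v) -
           (∑ v ∈ univ.filter (fun z => G.dist b z < G.dist a z), w v)) := by
  have hconn := hG.1
  obtain ⟨hx'H, hgate⟩ := hx'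
  have key : ∀ v : V,
      w v * (G.dist x' v : ℝ) + (G.dist x'' x' : ℝ) *
        ((if G.dist a v < G.dist b v then w v else 0) -
         (if G.dist b v < G.dist a v then w v else 0)) ≤ w v * (G.dist x'' v : ℝ) := by
    intro v
    rcases lt_or_gt_of_ne (median_dist_ne G hG hab v) with hv | hv
    · -- v ∈ H'
      have hg := hgate v hv
      simp only [interval, Set.mem_setOf_eq] at hg
      -- dist v x' + dist x' x'' = dist v x''
      have heq : (G.dist x'' v : ℝ) = (G.dist x'' x' : ℝ) + (G.dist x' v : ℝ) := by
        rw [SimpleGraph.dist_comm (u := x'') (v := v), SimpleGraph.dist_comm (u := x'') (v := x'),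
          SimpleGraph.dist_comm (u := x') (v := v), ← hg]
        push_cast; ring
      rw [if_pos hv, if_neg (by omega)]
      rw [heq]; nlinarith [hw v]
    · -- v ∈ H''
      rw [if_neg (by omega), if_pos hv]
      have htri : (G.dist x' v : ℝ) ≤ (G.dist x' x'' : ℝ) + (G.dist x'' v : ℝ) := by
        exact_mod_cast hconn.dist_triangle
      rw [SimpleGraph.dist_comm (u := x') (v := x'')] at htri
      nlinarith [hw v]
  calc (∑ v : V, w v * (G.dist x' v : ℝ)) +
        (G.dist x'' x' : ℝ) *
          ((∑ v ∈ univ.filter (fun z => G.dist a z < G.dist b z), w v) -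
           (∑ v ∈ univ.filter (fun z => G.dist b z < G.dist a z), w v))
      = ∑ v : V, (w v * (G.dist x' v : ℝ) + (G.dist x'' x' : ℝ) *
          ((if G.dist a v < G.dist b v then w v else 0) -
           (if G.dist b v < G.dist a v then w v else 0))) := by
        rw [sum_filter, sum_filter, Finset.sum_add_distrib, ← Finset.sum_sub_distrib,
          Finset.mul_sum]
    _ ≤ ∑ v : V, w v * (G.dist x'' v : ℝ) := Finset.sum_le_sum fun v _ => key v
end

section
/- Let G be a median graph with weight function w. Then every local median of G is a (global) median: if a vertex v satisfies F_w(v) ≤ F_w(u) for all neighbors u of v, then F_w(v) ≤ F_w(x) for all vertices x. -/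
namespace MedianAux

open SimpleGraph

variable {V : Type*} {G : SimpleGraph V}

lemma adj_dist (h : G.Adj a b) : G.dist a b = 1 :=
  SimpleGraph.dist_eq_one_iff_adj.mpr h

lemma adj_of_dist (h : G.dist a b = 1) : G.Adj a b :=
  SimpleGraph.dist_eq_one_iff_adj.mp h

lemma eq_of_dist_zero (hc : G.Connected) (h : G.dist a b = 0) : a = b :=
  (hc.dist_eq_zero_iff).mp h

lemma tri (hc : G.Connected) (a b c : V) : G.dist a c ≤ G.dist a b + G.dist b c :=
  hc.dist_triangle

lemma comm (a b : V) : G.dist a b = G.dist b a := SimpleGraph.dist_comm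

/-- first step of a geodesic -/
lemma step (hc : G.Connected) {a b : V} {n : ℕ} (h : G.dist a b = n + 1) :
    ∃ s, G.Adj a s ∧ G.dist s b = n := by
  obtain ⟨p, hp⟩ := hc.exists_walk_length_eq_dist a b
  rw [h] at hp
  cases p with
  | nil => simp at hp
  | cons hadj q =>
    rename_i s
    refine ⟨s, hadj, le_antisymm ?_ ?_⟩
    · have := SimpleGraph.dist_le q
      simp at hp; omega
    · have h1 := tri hc a s b
      rw [adj_dist hadj] at h1
      omega

/-- median extraction -/
lemma median_spec (hG : IsMedianGraph G) (x y z : V) :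
    ∃ m, (G.dist x m + G.dist m y = G.dist x y ∧ G.dist y m + G.dist m z = G.dist y z ∧
        G.dist z m + G.dist m x = G.dist z x) ∧
      ∀ m', (G.dist x m' + G.dist m' y = G.dist x y ∧ G.dist y m' + G.dist m' z = G.dist y z ∧
        G.dist z m' + G.dist m' x = G.dist z x) → m' = m := by
  obtain ⟨m, hm, hu⟩ := hG.2 x y z
  exact ⟨m, hm, fun m' h => hu m' h⟩

/-- bipartite dichotomy -/
lemma dichotomy (hG : IsMedianGraph G) (hab : G.Adj a b) (z : V) :
    G.dist a z + 1 = G.dist b z ∨ G.dist b z + 1 = G.dist a z := by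
  have hc := hG.1
  have h1 := tri hc b a z
  have h2 := tri hc a b z
  rw [adj_dist hab] at h2
  rw [adj_dist hab.symm] at h1
  have hne : G.dist a z ≠ G.dist b z := by
    intro he
    obtain ⟨m, ⟨hm1, hm2, hm3⟩, -⟩ := median_spec hG a b z
    rw [adj_dist hab] at hm1
    have h0 : G.dist a m = 0 ∨ G.dist m b = 0 := by omega
    rcases h0 with h0 | h0
    · have hma : a = m := eq_of_dist_zero hc h0
      subst hma
      rw [adj_dist hab.symm] at hm2
      have := comm (G := G) a z
      omega
    · have hmb : m = b := eq_of_dist_zero hc h0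
      rw [hmb] at hm3
      rw [adj_dist hab.symm] at hm3
      have c1 := comm (G := G) z b
      have c2 := comm (G := G) z a
      omega
  omega


/-- transport of halfspaces across a square -/
lemma square (hG : IsMedianGraph G) {p q r s z : V} (hpq : G.Adj p q) (hrs : G.Adj r s)
    (hpr : G.Adj p r) (hqs : G.Adj q s) (hqr : q ≠ r) (hps : p ≠ s)
    (hz : G.dist p z < G.dist q z) : G.dist r z < G.dist s z := by
  have hc := hG.1
  by_contra hcon
  push_neg at hcon
  have d1 := dichotomy hG hpq z
  have d2 := dichotomy hG hrs z
  have hq : G.dist q z = G.dist p z + 1 := by omega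
  have hr : G.dist r z = G.dist s z + 1 := by omega
  -- show distances line up
  have t1 := tri hc r p z
  have t2 := tri hc p r z
  have t3 := tri hc s q z
  have t4 := tri hc q s z
  rw [adj_dist hpr.symm] at t1
  rw [adj_dist hpr] at t2
  rw [adj_dist hqs.symm] at t3
  rw [adj_dist hqs] at t4
  have hs : G.dist s z = G.dist p z := by omega
  have hrz : G.dist r z = G.dist p z + 1 := by omega
  -- q and r are at distance 2
  have hqrnadj : ¬ G.Adj q r := by
    intro h
    have := dichotomy hG h z
    omega
  have hqr2 : G.dist q r = 2 := by
    have hle : G.dist q r ≤ 2 := by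
      have := tri hc q p r
      rw [adj_dist hpq.symm, adj_dist hpr] at this
      omega
    have h0 : G.dist q r ≠ 0 := fun h => hqr (eq_of_dist_zero hc h)
    have h1 : G.dist q r ≠ 1 := fun h => hqrnadj (adj_of_dist h)
    omega
  -- p and s are both medians of (q, r, z)
  obtain ⟨m, -, hu⟩ := median_spec hG q r z
  have hp' : p = m := by
    refine hu p ⟨?_, ?_, ?_⟩ <;>
    · have e1 := adj_dist hpq; have e2 := adj_dist hpq.symm
      have e3 := adj_dist hpr; have e4 := adj_dist hpr.symm
      have c1 := comm (G := G) z p; have c2 := comm (G := G) z q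
      omega
  have hs' : s = m := by
    refine hu s ⟨?_, ?_, ?_⟩ <;>
    · have e1 := adj_dist hqs; have e2 := adj_dist hqs.symm
      have e3 := adj_dist hrs; have e4 := adj_dist hrs.symm
      have c1 := comm (G := G) z s; have c2 := comm (G := G) z q
      have c3 := comm (G := G) s q; have c4 := comm (G := G) s r
      omega
  exact hps (hp'.trans hs'.symm)

/-- Θ-class transport: opposite edges define the same halfspace (one direction). -/
lemma theta (hG : IsMedianGraph G) : ∀ k : ℕ, ∀ a b c d z : V, G.Adj a b → G.Adj c d →
    G.dist a c = k → G.dist b c = k + 1 → G.dist b d = k → G.dist a d = k + 1 →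
    G.dist a z < G.dist b z → G.dist c z < G.dist d z := by
  have hc := hG.1
  intro k
  induction k with
  | zero =>
    intro a b c d z hab hcd hac hbc hbd had hz
    have h1 : a = c := eq_of_dist_zero hc hac
    have h2 : b = d := eq_of_dist_zero hc hbd
    subst h1; subst h2; exact hz
  | succ n ih =>
    intro a b c d z hab hcd hac hbc hbd had hz
    -- step from c toward a
    have hca : G.dist c a = n + 1 := by rw [comm (G := G) c a]; exact hac
    obtain ⟨c', hcc', hc'a⟩ := step hc hca
    have hac' : G.dist a c' = n := by rw [comm (G := G) a c']; exact hc'a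
    -- d(b,c') = n + 1
    have hbc' : G.dist b c' = n + 1 := by
      have hd := dichotomy hG hab c'
      have t := tri hc b c c'
      rw [adj_dist hcc'] at t
      have t' := tri hc b c' c
      rw [adj_dist hcc'.symm] at t'
      omega
    -- d(c', d) = 2
    have hc'd : G.dist c' d = 2 := by
      have hle : G.dist c' d ≤ 2 := by
        have := tri hc c' c d
        rw [comm (G := G) c' c, adj_dist hcc', adj_dist hcd] at this
        omega
      have t := tri hc a c' d
      omega
    -- median e of (b, c', d)
    obtain ⟨e, ⟨he1, he2, he3⟩, -⟩ := median_spec hG b c' d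
    rw [hbc'] at he1
    rw [hc'd] at he2
    rw [comm (G := G) d b, hbd] at he3
    have hbe : G.dist b e = n := by
      have c1 := comm (G := G) e c'
      have c2 := comm (G := G) e d
      have c3 := comm (G := G) e b
      have c4 := comm (G := G) d e
      omega
    have hec' : G.dist e c' = 1 := by
      have c3 := comm (G := G) e b
      have c4 := comm (G := G) d e
      omega
    have hed : G.dist e d = 1 := by
      have c1 := comm (G := G) c' e
      have c3 := comm (G := G) e b
      have c4 := comm (G := G) d e
      omega
    have hae : G.dist a e = n + 1 := by
      have t1 := tri hc a c' e
      have t2 := tri hc a e d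
      rw [hac'] at t1
      rw [hed] at t2
      have := comm (G := G) c' e
      omega
    -- apply IH to the edge (c', e)
    have hz' : G.dist c' z < G.dist e z :=
      ih a b c' e z hab (adj_of_dist hec').symm hac' hbc' hbe hae hz
    -- transport across the square c' e / c d
    have hec : e ≠ c := by
      intro h; rw [h] at hbe; omega
    have hc'dne : c' ≠ d := by
      intro h; rw [h] at hac'; omega
    exact square hG (adj_of_dist hec').symm hcd hcc'.symm (adj_of_dist hed) hec hc'dne hz'


/-- halfspaces are convex -/
lemma convex (hG : IsMedianGraph G) {a b : V} (hab : G.Adj a b) :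
    ∀ n : ℕ, ∀ z1 z2 y : V, G.dist z1 y = n →
      G.dist a z1 + 1 = G.dist b z1 → G.dist a z2 + 1 = G.dist b z2 →
      G.dist z1 y + G.dist y z2 = G.dist z1 z2 → G.dist a y + 1 = G.dist b y := by
  have hc := hG.1
  intro n
  induction n with
  | zero =>
    intro z1 z2 y h0 hz1 _ _
    rw [← eq_of_dist_zero hc h0]; exact hz1
  | succ n ih =>
    intro z1 z2 y h0 hz1 hz2 hint
    obtain ⟨s, hz1s, hsy⟩ := step hc h0
    have t1 := tri hc z1 s z2
    rw [adj_dist hz1s] at t1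
    have t2 := tri hc s y z2
    have hsz2 : G.dist s z2 = n + G.dist y z2 := by omega
    rcases dichotomy hG hab s with hs | hs
    · exact ih s z2 y hsy hs hz2 (by omega)
    · -- the edge (z1, s) is opposite to (a, b); use theta to get a contradiction
      exfalso
      have hd := dichotomy hG hz1s a
      have hd' := dichotomy hG hz1s b
      have c1 := comm (G := G) z1 a
      have c2 := comm (G := G) s a
      have c3 := comm (G := G) z1 b
      have c4 := comm (G := G) s b
      have has : G.dist a s = G.dist a z1 + 1 := by omega
      have hbs : G.dist b s = G.dist a z1 := by omega
      have hth := theta hG (G.dist a z1) a b z1 s z2 hab hz1s rfl hz1.symm hbs has (by omega)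
      omega

/-- gate lemma: if `v` is outside the halfspace of `x` (w.r.t. edge `x u`), then `v` has a
neighbor `u'` that is strictly closer to every vertex of that halfspace. -/
lemma gate [Fintype V] (hG : IsMedianGraph G) {x u v : V} (hxu : G.Adj x u)
    (hv : G.dist u v + 1 = G.dist x v) :
    ∃ u', G.Adj v u' ∧ ∀ z, G.dist x z + 1 = G.dist u z → G.dist u' z < G.dist v z := by
  classical
  have hc := hG.1
  set H : Finset V := Finset.univ.filter (fun z => G.dist x z + 1 = G.dist u z) with hH
  have hxH : x ∈ H := by
    simp only [hH, Finset.mem_filter, Finset.mem_univ, true_and]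
    rw [SimpleGraph.dist_self, adj_dist hxu.symm]
  obtain ⟨p, hpH, hpmin⟩ := H.exists_min_image (fun z => G.dist v z) ⟨x, hxH⟩
  have hp : G.dist x p + 1 = G.dist u p := by
    simpa [hH] using hpH
  have hne : v ≠ p := by
    intro h; rw [← h] at hp
    have c1 := comm (G := G) x v
    have c2 := comm (G := G) u v
    omega
  have h0 : G.dist v p ≠ 0 := fun h => hne (eq_of_dist_zero hc h)
  obtain ⟨u', hvu', hu'p⟩ := step hc (show G.dist v p = (G.dist v p - 1) + 1 by omega)
  refine ⟨u', hvu', fun z hz => ?_⟩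
  obtain ⟨m', ⟨hm1, hm2, hm3⟩, -⟩ := median_spec hG v p z
  have hm'H : G.dist x m' + 1 = G.dist u m' := convex hG hxu (G.dist p m') p z m' rfl hp hz hm2
  have hm'mem : m' ∈ H := by simp [hH, hm'H]
  have hmin := hpmin m' hm'mem
  have hm'p : G.dist m' p = 0 := by omega
  have hpm : m' = p := eq_of_dist_zero hc hm'p
  rw [hpm] at hm3
  -- hm3 : d z p + d p v = d z v
  have t := tri hc u' p z
  have c1 := comm (G := G) z p
  have c2 := comm (G := G) z v
  have c3 := comm (G := G) p v
  omega

lemma sum_shift [Fintype V] (hG : IsMedianGraph G) (w : V → ℝ) {a b : V} (hab : G.Adj a b) :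
    ∑ z : V, w z * (G.dist b z : ℝ) = (∑ z : V, w z * (G.dist a z : ℝ)) +
      ∑ z : V, (if G.dist a z < G.dist b z then w z else -w z) := by
  rw [← Finset.sum_add_distrib]
  apply Finset.sum_congr rfl
  intro z _
  rcases dichotomy hG hab z with h | h
  · rw [if_pos (by omega), ← h]; push_cast; ring
  · rw [if_neg (by omega), ← h]; push_cast; ring

end MedianAux

/-- In a median graph, every local median of the median function is a global median. -/
theorem local_median_is_global {V : Type*} [Fintype V] (G : SimpleGraph V)
    (hG : IsMedianGraph G) (w : V → ℝ) (hw : ∀ v, 0 ≤ w v) (v : V)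
    (hloc : ∀ u : V, G.Adj v u →
      (∑ z : V, w z * (G.dist v z : ℝ)) ≤ ∑ z : V, w z * (G.dist u z : ℝ)) :
    ∀ x : V, (∑ z : V, w z * (G.dist v z : ℝ)) ≤ ∑ z : V, w z * (G.dist x z : ℝ) := by
  classical
  have hc := hG.1
  suffices h : ∀ n : ℕ, ∀ x : V, G.dist v x = n →
      (∑ z : V, w z * (G.dist v z : ℝ)) ≤ ∑ z : V, w z * (G.dist x z : ℝ) by
    intro x; exact h _ x rfl
  intro n
  induction n with
  | zero =>
    intro x hx
    rw [← MedianAux.eq_of_dist_zero hc hx]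
  | succ n ih =>
    intro x hx
    have hxv : G.dist x v = n + 1 := by rw [MedianAux.comm x v]; exact hx
    obtain ⟨u, hxu, huv⟩ := MedianAux.step hc hxv
    have hvu : G.dist v u = n := by rw [MedianAux.comm v u]; exact huv
    have h1 := ih u hvu
    have hgv : G.dist u v + 1 = G.dist x v := by omega
    obtain ⟨u', hvu', hkey⟩ := MedianAux.gate hG hxu hgv
    have h2 := hloc u' hvu'
    rw [MedianAux.sum_shift hG w hvu'] at h2
    have h0 : (0:ℝ) ≤ ∑ z : V, (if G.dist v z < G.dist u' z then w z else -w z) := by linarith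
    have hcmp : (∑ z : V, (if G.dist v z < G.dist u' z then w z else -w z)) ≤
        ∑ z : V, (if G.dist u z < G.dist x z then w z else -w z) := by
      apply Finset.sum_le_sum
      intro z _
      rcases MedianAux.dichotomy hG hxu z with h | h
      · have hz' := hkey z h
        have e1 : ¬ (G.dist v z < G.dist u' z) := by omega
        have e2 : ¬ (G.dist u z < G.dist x z) := by omega
        rw [if_neg e1, if_neg e2]
      · have e3 : (if G.dist u z < G.dist x z then w z else -w z) = w z :=
          if_pos (show G.dist u z < G.dist x z by omega)
        rw [e3]
        split_ifs
        · exact le_refl _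
        · linarith [hw z]
    rw [MedianAux.sum_shift hG w hxu.symm]
    linarith
end

section
/- Let G be a partial cube (a graph isometrically embeddable into a hypercube) with Θ-classes E_1,…,E_q defining complementary halfspaces H'_i, H''_i, and let w be a weight function on vertices. Then the weighted Wiener index satisfies W_w(G) = Σ_{u,v∈V} w(u)w(v)d(u,v) = 2·Σ_{i=1}^q w(H'_i)·w(H''_i) (equivalently, summing each unordered pair once, W_w(G) = Σ_i w(H'_i)·w(H''_i)). -/
/-- `G` is a partial cube: connected and isometrically embeddable into a hypercube
(graph distance equals Hamming distance of the images). -/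
def IsPartialCube {V : Type*} (G : SimpleGraph V) : Prop :=
  G.Connected ∧ ∃ (n : ℕ) (f : V → (Fin n → Bool)),
    ∀ u v : V, G.dist u v = hammingDist (f u) (f v)

/-!
Through an isometric embedding `f : V → (ι → Bool)`, `d(u, v)` counts the coordinates in which
`f u` and `f v` differ, so the weighted Wiener sum splits coordinatewise into
`∑ i, ∑ b, w {f · i = b} * w {f · i = !b}`. The endpoints of an edge `uv` differ in exactly
one coordinate `i`, and then `W(u, v) = {x | f x i = f u i}`. Hence the pairs `(W(u, v), W(v, u))`
are exactly the pairs of coordinate halfspaces of the coordinates flipped by some edge, each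
obtained from one `(i, b)` only; a coordinate flipped by no edge is constant on the connected
graph and contributes nothing.
-/

open Finset

section Hamming

variable {ι β : Type*}

def DiffersOnlyAt (x y : ι → β) (i : ι) : Prop :=
  ∀ j, x j ≠ y j ↔ j = i

theorem DiffersOnlyAt.symm {x y : ι → β} {i : ι} (h : DiffersOnlyAt x y i) :
    DiffersOnlyAt y x i :=
  fun j => ne_comm.trans (h j)

variable [Fintype ι] [DecidableEq β]

theorem hammingDist_eq_one_iff {x y : ι → β} :
    hammingDist x y = 1 ↔ ∃ i, DiffersOnlyAt x y i := by
  simp only [hammingDist, card_eq_one, Finset.ext_iff, mem_filter, mem_univ, true_and,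
    mem_singleton, DiffersOnlyAt]

theorem hammingDist_eq_sum_ite {R : Type*} [AddCommMonoidWithOne R] (x y : ι → β) :
    (hammingDist x y : R) = ∑ i, if x i ≠ y i then 1 else 0 :=
  natCast_card_filter _ _

theorem hammingDist_lt_hammingDist_iff {x y : ι → β} {i : ι} (hxy : DiffersOnlyAt x y i)
    (z : ι → β) : hammingDist x z < hammingDist y z ↔ x i = z i := by
  classical
  have hrest : ∑ j ∈ univ.erase i, (if x j ≠ z j then 1 else 0) =
      ∑ j ∈ univ.erase i, (if y j ≠ z j then 1 else 0) :=
    sum_congr rfl fun j hj => by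
      rw [not_not.mp fun h => ne_of_mem_erase hj ((hxy j).mp h)]
  have hi : x i ≠ y i := (hxy i).mpr rfl
  rw [hammingDist, hammingDist, card_filter, card_filter, ← add_sum_erase _ _ (mem_univ i),
    ← add_sum_erase _ _ (mem_univ i), hrest, add_lt_add_iff_right]
  by_cases h : x i = z i
  · simp [h, show y i ≠ z i from h ▸ hi.symm]
  · simp only [h, ne_eq, not_false_eq_true, ite_true, iff_false, not_lt]
    split_ifs <;> omega

end Hamming

theorem SimpleGraph.Preconnected.eq_of_forall_adj {V α : Type*} {G : SimpleGraph V}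
    (hG : G.Preconnected) {g : V → α} (hg : ∀ u v, G.Adj u v → g u = g v) (x y : V) :
    g x = g y := by
  obtain ⟨p⟩ := hG x y
  induction p with
  | nil => rfl
  | cons hadj _ ih => exact (hg _ _ hadj).trans ih

section CoordinateHalfspaces

variable {V ι : Type*} [Fintype V]

def coordHalfspace (f : V → ι → Bool) (i : ι) (b : Bool) : Finset V :=
  {x | f x i = b}

def halfspacePair (f : V → ι → Bool) (p : ι × Bool) : Set V × Set V :=
  (coordHalfspace f p.1 p.2, coordHalfspace f p.1 (!p.2))

theorem sum_coord_ne_eq_sum_mul (f : V → ι → Bool) (w : V → ℝ) (i : ι) :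
    ∑ u, ∑ v, (if f u i ≠ f v i then w u * w v else 0) =
      ∑ b, (∑ x ∈ coordHalfspace f i b, w x) * ∑ x ∈ coordHalfspace f i (!b), w x := by
  have hrow : ∀ u, ∑ v, (if f u i ≠ f v i then w u * w v else 0) =
      ∑ v ∈ coordHalfspace f i (!f u i), w u * w v := fun u => by
    rw [coordHalfspace, sum_filter]
    exact sum_congr rfl fun v _ => by simp only [Bool.eq_not_iff, ne_comm]
  simp_rw [hrow, sum_mul_sum]
  rw [← sum_fiberwise univ (fun u => f u i)]
  refine sum_congr rfl fun b _ => sum_congr rfl fun u hu => ?_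
  rw [(mem_filter.mp hu).2]

theorem sum_mul_hammingDist_eq_sum_coord [Fintype ι] (f : V → ι → Bool) (w : V → ℝ) :
    ∑ u, ∑ v, w u * w v * (hammingDist (f u) (f v) : ℝ) =
      ∑ i, ∑ u, ∑ v, (if f u i ≠ f v i then w u * w v else 0) := by
  simp_rw [hammingDist_eq_sum_ite, mul_sum, mul_ite, mul_one, mul_zero]
  exact (sum_congr rfl fun u _ => sum_comm).trans sum_comm

end CoordinateHalfspaces

section PartialCube

variable {V ι : Type*} [Fintype ι] {G : SimpleGraph V} {f : V → ι → Bool}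

open Classical in
noncomputable def flippedCoords (G : SimpleGraph V) (f : V → ι → Bool) : Finset ι :=
  {i | ∃ u v, G.Adj u v ∧ f u i ≠ f v i}

theorem mem_flippedCoords {i : ι} :
    i ∈ flippedCoords G f ↔ ∃ u v, G.Adj u v ∧ f u i ≠ f v i := by
  classical
  simp [flippedCoords]

theorem sum_coord_ne_eq_zero_of_notMem_flippedCoords [Fintype V] (hG : G.Preconnected)
    (w : V → ℝ) {i : ι} (hi : i ∉ flippedCoords G f) :
    ∑ u, ∑ v, (if f u i ≠ f v i then w u * w v else 0) = 0 := by
  have hconst : ∀ u v, f u i = f v i :=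
    hG.eq_of_forall_adj fun u v huv => not_not.mp fun hne =>
      hi (mem_flippedCoords.mpr ⟨u, v, huv, hne⟩)
  exact sum_eq_zero fun u _ => sum_eq_zero fun v _ => if_neg (not_not.mpr (hconst u v))

variable (hf : ∀ u v, G.dist u v = hammingDist (f u) (f v))
include hf

theorem exists_differsOnlyAt_of_adj {u v : V} (huv : G.Adj u v) :
    ∃ i, DiffersOnlyAt (f u) (f v) i :=
  hammingDist_eq_one_iff.mp (by rw [← hf, SimpleGraph.dist_eq_one_iff_adj.mpr huv])

theorem differsOnlyAt_of_adj {u v : V} (huv : G.Adj u v) {i : ι} (hi : f u i ≠ f v i) :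
    DiffersOnlyAt (f u) (f v) i := by
  obtain ⟨k, hk⟩ := exists_differsOnlyAt_of_adj hf huv
  rwa [(hk i).mp hi]

theorem exists_adj_differsOnlyAt {i : ι} (hi : i ∈ flippedCoords G f) (b : Bool) :
    ∃ x y, G.Adj x y ∧ f x i = b ∧ DiffersOnlyAt (f x) (f y) i := by
  obtain ⟨u, v, huv, hne⟩ := mem_flippedCoords.mp hi
  have hdiff := differsOnlyAt_of_adj hf huv hne
  by_cases hb : f u i = b
  · exact ⟨u, v, huv, hb, hdiff⟩
  · refine ⟨v, u, huv.symm, ?_, hdiff.symm⟩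
    rw [Bool.eq_not_iff.mpr hne.symm, Bool.eq_not_iff.mpr hb, Bool.not_not]

variable [Fintype V]

theorem Wset_eq_coordHalfspace {u v : V} {i : ι} (h : DiffersOnlyAt (f u) (f v) i) :
    Wset G u v = coordHalfspace f i (f u i) := by
  ext x
  simp [Wset, coordHalfspace, hf, hammingDist_lt_hammingDist_iff h, eq_comm]

theorem halfspacePairs_eq_image :
    {p : Set V × Set V | ∃ u v, G.Adj u v ∧ p.1 = Wset G u v ∧ p.2 = Wset G v u} =
      halfspacePair f '' ((flippedCoords G f : Set ι) ×ˢ Set.univ) := by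
  ext ⟨H₁, H₂⟩
  simp only [Set.mem_ofPred_eq, Set.mem_image, Set.mem_prod,
    mem_coe, Set.mem_univ, and_true, Prod.exists, halfspacePair, Prod.mk.injEq]
  constructor
  · rintro ⟨u, v, huv, rfl, rfl⟩
    obtain ⟨i, hi⟩ := exists_differsOnlyAt_of_adj hf huv
    have hne : f u i ≠ f v i := (hi i).mpr rfl
    refine ⟨i, f u i, mem_flippedCoords.mpr ⟨u, v, huv, hne⟩, ?_, ?_⟩
    · rw [Wset_eq_coordHalfspace hf hi]
    · rw [Wset_eq_coordHalfspace hf hi.symm, Bool.eq_not_iff.mpr hne.symm]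
  · rintro ⟨i, b, hi, rfl, rfl⟩
    obtain ⟨x, y, hxy, rfl, hdiff⟩ := exists_adj_differsOnlyAt hf hi b
    refine ⟨x, y, hxy, (Wset_eq_coordHalfspace hf hdiff).symm, ?_⟩
    rw [Wset_eq_coordHalfspace hf hdiff.symm, Bool.eq_not_iff.mpr ((hdiff i).mpr rfl).symm]

theorem injOn_halfspacePair :
    Set.InjOn (halfspacePair f) ((flippedCoords G f : Set ι) ×ˢ Set.univ) := by
  rintro ⟨i, b⟩ hib ⟨j, c⟩ - heq
  obtain ⟨x, y, -, rfl, hdiff⟩ := exists_adj_differsOnlyAt hf (i := i) hib.1 b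
  simp only [halfspacePair, Prod.mk.injEq, coe_inj] at heq
  have hx : x ∈ coordHalfspace f j c := heq.1 ▸ by simp [coordHalfspace]
  have hy : y ∈ coordHalfspace f j (!c) := heq.2 ▸ by
    simp [coordHalfspace, Bool.eq_not_iff.mpr ((hdiff i).mpr rfl).symm]
  simp only [coordHalfspace, mem_filter, mem_univ, true_and] at hx hy
  have hji : j = i := (hdiff j).mp (by rw [hx, hy]; exact Bool.not_ne_self c |>.symm)
  subst hji
  rw [hx]

end PartialCube

theorem wiener_index_partial_cube_general {V : Type*} [Fintype V] (G : SimpleGraph V)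
    (hpc : IsPartialCube G) (w : V → ℝ) :
    (∑ u : V, ∑ v : V, w u * w v * (G.dist u v : ℝ)) =
      ∑ᶠ p ∈ {p : Set V × Set V | ∃ u v : V, G.Adj u v ∧
          p.1 = Wset G u v ∧ p.2 = Wset G v u},
        (∑ᶠ x ∈ p.1, w x) * (∑ᶠ x ∈ p.2, w x) := by
  obtain ⟨hconn, n, f, hf⟩ := hpc
  calc (∑ u, ∑ v, w u * w v * (G.dist u v : ℝ))
      = ∑ i, ∑ u, ∑ v, (if f u i ≠ f v i then w u * w v else 0) := by
        simp_rw [hf]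
        exact sum_mul_hammingDist_eq_sum_coord f w
    _ = ∑ i ∈ flippedCoords G f, ∑ u, ∑ v, (if f u i ≠ f v i then w u * w v else 0) :=
        (sum_subset (subset_univ _) fun i _ hi =>
          sum_coord_ne_eq_zero_of_notMem_flippedCoords hconn.preconnected w hi).symm
    _ = ∑ p ∈ flippedCoords G f ×ˢ univ,
          (∑ x ∈ coordHalfspace f p.1 p.2, w x) *
            ∑ x ∈ coordHalfspace f p.1 (!p.2), w x := by
        rw [sum_product]
        exact sum_congr rfl fun i _ => sum_coord_ne_eq_sum_mul f w i
    _ = _ := by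
        rw [halfspacePairs_eq_image hf, finsum_mem_image (injOn_halfspacePair hf), ← coe_univ,
          ← coe_product, finsum_mem_coe_finset]
        simp only [halfspacePair, finsum_mem_coe_finset]

/-- Weighted Wiener index of a partial cube: the (ordered) double sum
`Σ_{u,v} w(u)w(v)d(u,v)` equals the sum of `w(H')·w(H'')` over all ordered pairs of
complementary halfspaces `(W(u,v), W(v,u))`, i.e. twice the sum over `Θ`-classes. -/
theorem wiener_index_partial_cube {V : Type*} [Fintype V] (G : SimpleGraph V)
    (hpc : IsPartialCube G) (w : V → ℝ) (hw : ∀ v, 0 ≤ w v) :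
    (∑ u : V, ∑ v : V, w u * w v * (G.dist u v : ℝ)) =
      ∑ᶠ p ∈ {p : Set V × Set V | ∃ u v : V, G.Adj u v ∧
          p.1 = Wset G u v ∧ p.2 = Wset G v u},
        (∑ᶠ x ∈ p.1, w x) * (∑ᶠ x ∈ p.2, w x) :=
  wiener_index_partial_cube_general G hpc w
end
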